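/- The Craig representation of the Gaussian Q-function: for x ≥ 0, Q(x) = (1/π)∫₀^{π/2} exp(−x²/(2 sin²ψ)) dψ. -/

import Mathlib

open MeasureTheory Real

/-- The Gaussian Q-function. -/
noncomputable def gaussianQ (x : ℝ) : ℝ :=
  (1 / Real.sqrt (2 * Real.pi)) * ∫ t in Set.Ioi x, Real.exp (-t ^ 2 / 2)

/-!
Both sides are continuous on `[0, ∞)`, equal `1/2` at `x = 0`, and have the same derivative
`-exp (-x²/2) / √(2π)` for `x > 0`. For the right-hand side, write it with `cos` via
`ψ = π/2 - θ` and differentiate under the integral sign; since `1/cos²θ = 1 + tan²θ`, the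
substitution `t = x tan θ` turns the derivative into the Gaussian integral over `(0, ∞)`.
-/

open Set Filter intervalIntegral

theorem eq_of_hasDerivAt_eq_of_continuousOn {f g f' : ℝ → ℝ} {a b : ℝ} (hab : a ≤ b)
    (hf : ContinuousOn f (Icc a b)) (hg : ContinuousOn g (Icc a b))
    (hf' : ∀ x ∈ Ioo a b, HasDerivAt f (f' x) x) (hg' : ∀ x ∈ Ioo a b, HasDerivAt g (f' x) x)
    (ha : f a = g a) : f b = g b := by
  rcases hab.eq_or_lt with rfl | hlt
  · exact ha
  obtain ⟨_, -, hslope⟩ := exists_hasDerivAt_eq_slope (fun x => f x - g x) (fun _ => 0) hlt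
    (hf.sub hg) fun x hx => ((hf' x hx).sub (hg' x hx)).congr_deriv (sub_self _)
  rcases div_eq_zero_iff.mp hslope.symm with h | h <;> linarith

section
variable {E : Type*} [NormedAddCommGroup E] [NormedSpace ℝ E]

theorem hasDerivAt_integral_Ioi [CompleteSpace E] {f : ℝ → E} (hf : Integrable f)
    (hcont : Continuous f) (x : ℝ) : HasDerivAt (fun a => ∫ t in Ioi a, f t) (-f x) x := by
  have hsplit :
      (fun a => ∫ t in Ioi a, f t) = fun a => (∫ t in Ioi 0, f t) - ∫ t in 0..a, f t := by
    funext a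
    rw [← integral_Ioi_sub_Ioi' hf.integrableOn hf.integrableOn, sub_sub_cancel]
  rw [hsplit]
  simpa using (hcont.integral_hasStrictDerivAt 0 x).hasDerivAt.const_sub (∫ t in Ioi 0, f t)

theorem integral_Ioi_eq_integral_Ioo_tan (f : ℝ → E) :
    ∫ t in Ioi 0, f t = ∫ θ in Ioo 0 (π / 2), (cos θ ^ 2)⁻¹ • f (tan θ) := by
  have hIoo : Ioo 0 (π / 2) ⊆ Ioo (-(π / 2)) (π / 2) :=
    Ioo_subset_Ioo_left (by linarith [pi_pos])
  have himage : tan '' Ioo 0 (π / 2) = Ioi 0 := by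
    ext t
    constructor
    · rintro ⟨θ, ⟨h0, hθ⟩, rfl⟩
      exact tan_pos_of_pos_of_lt_pi_div_two h0 hθ
    · intro ht
      exact ⟨arctan t, ⟨arctan_pos.mpr ht, arctan_lt_pi_div_two t⟩, tan_arctan t⟩
  have hderiv : ∀ θ ∈ Ioo 0 (π / 2), HasDerivWithinAt tan (cos θ ^ 2)⁻¹ (Ioo 0 (π / 2)) θ :=
    fun θ hθ => by simpa only [one_div] using (hasDerivAt_tan_of_mem_Ioo (hIoo hθ)).hasDerivWithinAt
  rw [← himage, integral_image_eq_integral_abs_deriv_smul measurableSet_Ioo hderiv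
    (injOn_tan.mono hIoo)]
  simp only [abs_inv, abs_sq]

theorem integral_comp_sin_eq_integral_comp_cos (h : ℝ → E) :
    ∫ ψ in 0..π / 2, h (sin ψ) = ∫ θ in 0..π / 2, h (cos θ) := by
  simp_rw [← cos_pi_div_two_sub]
  rw [integral_comp_sub_left (fun θ => h (cos θ)), sub_self, sub_zero]

end

theorem integral_exp_neg_sq_div_two_Ioi : ∫ t in Ioi 0, exp (-t ^ 2 / 2) = √(2 * π) / 2 := by
  have h := integral_gaussian_Ioi (1 / 2)
  simp only [neg_mul, one_div_mul_eq_div] at h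
  simp_rw [neg_div]
  rw [h, div_div_eq_mul_div, div_one, mul_comm]

theorem integrable_exp_neg_sq_div_two : Integrable fun t : ℝ => exp (-t ^ 2 / 2) := by
  simpa [neg_div, div_eq_inv_mul] using integrable_exp_neg_mul_sq (by norm_num : (0 : ℝ) < 1 / 2)

theorem gaussianQ_zero : gaussianQ 0 = 1 / 2 := by
  have : √(2 * π) ≠ 0 := by positivity
  rw [gaussianQ, integral_exp_neg_sq_div_two_Ioi]
  field_simp

theorem hasDerivAt_gaussianQ (x : ℝ) :
    HasDerivAt gaussianQ (-(exp (-x ^ 2 / 2) / √(2 * π))) x :=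
  ((hasDerivAt_integral_Ioi integrable_exp_neg_sq_div_two (by fun_prop) x).const_mul
    (1 / √(2 * π))).congr_deriv (by ring)

theorem continuous_gaussianQ : Continuous gaussianQ :=
  continuous_iff_continuousAt.2 fun x => (hasDerivAt_gaussianQ x).continuousAt

noncomputable def craigIntegral (x : ℝ) : ℝ := ∫ θ in 0..π / 2, exp (-x ^ 2 / (2 * cos θ ^ 2))

theorem craigIntegral_zero : craigIntegral 0 = π / 2 := by
  simp [craigIntegral]

theorem norm_exp_neg_sq_div_le_one (x c : ℝ) : ‖exp (-x ^ 2 / (2 * c ^ 2))‖ ≤ 1 := by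
  rw [norm_of_nonneg (exp_pos _).le, exp_le_one_iff, neg_div]
  exact neg_nonpos.mpr (by positivity)

theorem continuous_craigIntegral : Continuous craigIntegral := by
  refine continuous_of_dominated_interval (bound := fun _ => 1) (fun x => ?_) (fun x => ?_)
    intervalIntegrable_const (ae_of_all _ fun θ _ => by fun_prop)
  · exact (by fun_prop : Measurable fun θ => exp (-x ^ 2 / (2 * cos θ ^ 2))).aestronglyMeasurable
  · exact ae_of_all _ fun θ _ => norm_exp_neg_sq_div_le_one x (cos θ)

theorem div_sq_mul_exp_le {x : ℝ} (hx : 0 < x) (c : ℝ) :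
    x / c ^ 2 * exp (-x ^ 2 / (2 * c ^ 2)) ≤ 2 / x := by
  set y := x ^ 2 / (2 * c ^ 2)
  have hy : x / c ^ 2 = 2 / x * y := by
    simp only [y]
    field_simp
  calc x / c ^ 2 * exp (-x ^ 2 / (2 * c ^ 2)) = 2 / x * (y * exp (-y)) := by
        rw [hy, neg_div, mul_assoc]
    _ ≤ 2 / x * 1 := by
        gcongr
        exact (mul_exp_neg_le_exp_neg_one y).trans (exp_le_one_iff.mpr (by norm_num))
    _ = 2 / x := mul_one _

theorem integral_div_cos_sq_mul_exp {x : ℝ} (hx : 0 < x) :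
    ∫ θ in 0..π / 2, x / cos θ ^ 2 * exp (-x ^ 2 / (2 * cos θ ^ 2)) =
      √(2 * π) / 2 * exp (-x ^ 2 / 2) := by
  have hpointwise : ∀ θ ∈ Ioo 0 (π / 2), x / cos θ ^ 2 * exp (-x ^ 2 / (2 * cos θ ^ 2)) =
      x * exp (-x ^ 2 / 2) * ((cos θ ^ 2)⁻¹ • exp (-(x * tan θ) ^ 2 / 2)) := by
    intro θ hθ
    have hcos : cos θ ≠ 0 := (cos_pos_of_mem_Ioo ⟨by linarith [hθ.1, pi_pos], hθ.2⟩).ne'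
    have hexp :
        exp (-x ^ 2 / (2 * cos θ ^ 2)) = exp (-x ^ 2 / 2) * exp (-(x * tan θ) ^ 2 / 2) := by
      rw [← exp_add, tan_eq_sin_div_cos]
      congr 1
      field_simp
      linear_combination sin_sq_add_cos_sq θ
    rw [hexp, smul_eq_mul]
    field_simp
  rw [integral_of_le (by positivity), integral_Ioc_eq_integral_Ioo,
    setIntegral_congr_fun measurableSet_Ioo hpointwise, MeasureTheory.integral_const_mul,
    ← integral_Ioi_eq_integral_Ioo_tan (fun t => exp (-(x * t) ^ 2 / 2)),
    integral_comp_mul_left_Ioi (fun t => exp (-t ^ 2 / 2)) 0 hx, mul_zero,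
    integral_exp_neg_sq_div_two_Ioi, smul_eq_mul]
  field_simp

theorem hasDerivAt_craigIntegral {x : ℝ} (hx : 0 < x) :
    HasDerivAt craigIntegral (-(√(2 * π) / 2 * exp (-x ^ 2 / 2))) x := by
  have hderiv := hasDerivAt_integral_of_dominated_loc_of_deriv_le
    (μ := volume) (a := 0) (b := π / 2)
    (F := fun y θ => exp (-y ^ 2 / (2 * cos θ ^ 2)))
    (F' := fun y θ => -(y / cos θ ^ 2 * exp (-y ^ 2 / (2 * cos θ ^ 2))))
    (bound := fun _ => 4 / x) (Ioi_mem_nhds (half_lt_self hx))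
    (Eventually.of_forall fun y => (by fun_prop : Measurable _).aestronglyMeasurable)
    (intervalIntegrable_const.mono_fun (by fun_prop : Measurable _).aestronglyMeasurable
      (ae_of_all _ fun θ => (norm_exp_neg_sq_div_le_one x (cos θ)).trans (norm_one (α := ℝ)).ge))
    (by fun_prop) ?bound intervalIntegrable_const ?diff
  case bound =>
    refine ae_of_all _ fun θ _ y (hy : x / 2 < y) => ?_
    have hy0 : 0 < y := by linarith
    rw [norm_neg, norm_of_nonneg (by positivity)]
    calc _ ≤ 2 / y := div_sq_mul_exp_le hy0 _
      _ ≤ 4 / x := by rw [div_le_div_iff₀ (by linarith) hx]; linarith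
  case diff =>
    -- no need to avoid `cos θ = 0`: there `y / 0 = 0` makes `F y θ = 1` and `F' y θ = 0`
    refine ae_of_all _ fun θ _ y _ => ?_
    exact (((hasDerivAt_pow 2 y).fun_neg.div_const _).exp).congr_deriv (by ring)
  rw [intervalIntegral.integral_neg, integral_div_cos_sq_mul_exp hx] at hderiv
  exact hderiv.2

/-- Craig's representation of the Gaussian Q-function. -/
theorem craig_representation (x : ℝ) (hx : 0 ≤ x) :
    gaussianQ x =
      (1 / Real.pi) *
        ∫ ψ in (0 : ℝ)..(Real.pi / 2), Real.exp (-x ^ 2 / (2 * Real.sin ψ ^ 2)) := by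
  rw [integral_comp_sin_eq_integral_comp_cos fun s => exp (-x ^ 2 / (2 * s ^ 2))]
  refine eq_of_hasDerivAt_eq_of_continuousOn (g := fun y => 1 / π * craigIntegral y) hx
    continuous_gaussianQ.continuousOn (continuous_const.mul continuous_craigIntegral).continuousOn
    (fun y _ => hasDerivAt_gaussianQ y) (fun y hy => ?_) ?_
  · refine ((hasDerivAt_craigIntegral hy.1).const_mul (1 / π)).congr_deriv ?_
    field_simp
    rw [sq_sqrt (by positivity)]
  · rw [gaussianQ_zero, craigIntegral_zero]
    field_simp
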